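/- arXiv:2603.24423 — 2 statements merged into one kernel-verified Lean document; each statement's English description precedes it below -/
import Mathlib

section
/- Let X be a connected graph with basepoint vertex o and assume the edge-weight distribution ν has finite mean b = E[ω(e)] < ∞. Let α, β : [0,∞) → X be geodesic rays from o (in the graph metric) such that lim_{t→∞} d(α(t), β(t))/t = 0. Then for P-almost every ω, lim_{t→∞} d_ω(α(t), β(t))/t = 0. Consequently, sublinear fellow traveling of geodesic rays is almost surely preserved by first passage percolation, and the induced map on sublinear equivalence classes is well defined. -/
open MeasureTheory ProbabilityTheory Filter Set

namespace FPPx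

variable {V : Type*}

/-- A sublinear function: monotone increasing, concave on `[0,∞)`, with values in `[1,∞)`
and `κ t / t → 0`. -/
structure SublinearFun (κ : ℝ → ℝ) : Prop where
  mono : MonotoneOn κ (Set.Ici 0)
  concave : ConcaveOn ℝ (Set.Ici 0) κ
  one_le : ∀ t : ℝ, 0 ≤ t → 1 ≤ κ t
  tendsto : Filter.Tendsto (fun t => κ t / t) Filter.atTop (nhds 0)

/-- The ω-weighted length of a walk. -/
noncomputable def wLen (G : SimpleGraph V) (w : Sym2 V → ℝ) {u v : V} (p : G.Walk u v) : ℝ :=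
  (p.edges.map w).sum

/-- The ω-weighted distance between two vertices: infimum of weighted lengths of
connecting walks. -/
noncomputable def wDist (G : SimpleGraph V) (w : Sym2 V → ℝ) (u v : V) : ℝ :=
  sInf {s : ℝ | ∃ p : G.Walk u v, s = wLen G w p}

/-- The graph metric, as a real-valued distance function. -/
noncomputable def gd (G : SimpleGraph V) (u v : V) : ℝ := (G.dist u v : ℝ)

/-- Bounded vertex degree (by `q`). -/
def BoundedDegree (G : SimpleGraph V) (q : ℕ) : Prop :=
  ∀ v : V, (G.neighborSet v).Finite ∧ (G.neighborSet v).ncard ≤ q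

/-- Distance from a point to a set, with respect to a distance function `δ`. -/
noncomputable def dInf (δ : V → V → ℝ) (x : V) (Z : Set V) : ℝ := sInf ((δ x) '' Z)

/-- The `(κ, n)`-neighborhood of a set `Z`, with respect to a distance function `δ`
and basepoint `o`. -/
def nbhd (δ : V → V → ℝ) (o : V) (κ : ℝ → ℝ) (Z : Set V) (n : ℝ) : Set V :=
  {x : V | dInf δ x Z ≤ n * κ (δ o x)}

/-- A (discrete) `(q,Q)`-quasi-geodesic ray, with respect to a distance function `δ`. -/
def IsQG (δ : V → V → ℝ) (q Q : ℝ) (f : ℕ → V) : Prop :=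
  ∀ m n : ℕ, |(m : ℝ) - n| / q - Q ≤ δ (f m) (f n) ∧ δ (f m) (f n) ≤ q * |(m : ℝ) - n| + Q

/-- A (discrete) `(q,Q)`-quasi-geodesic segment defined on `[a,b] ∩ ℕ`. -/
def IsQGSeg (δ : V → V → ℝ) (q Q : ℝ) (a b : ℕ) (f : ℕ → V) : Prop :=
  ∀ m ∈ Set.Icc a b, ∀ n ∈ Set.Icc a b,
    |(m : ℝ) - n| / q - Q ≤ δ (f m) (f n) ∧ δ (f m) (f n) ≤ q * |(m : ℝ) - n| + Q

/-- `m` is a `κ`-Morse gauge for the set `Z`: every `(q,Q)`-quasi-geodesic segment with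
endpoints on `Z` stays in the `(κ, m q Q)`-neighborhood of `Z`. -/
def IsGauge (δ : V → V → ℝ) (o : V) (κ : ℝ → ℝ) (Z : Set V) (m : ℝ → ℝ → ℝ) : Prop :=
  ∀ q Q : ℝ, 1 ≤ q → 0 ≤ Q → ∀ a b : ℕ, ∀ f : ℕ → V, IsQGSeg δ q Q a b f →
    f a ∈ Z → f b ∈ Z → ∀ n ∈ Set.Icc a b, f n ∈ nbhd δ o κ Z (m q Q)

/-- `Z` is `κ`-Morse. -/
def IsMorse (δ : V → V → ℝ) (o : V) (κ : ℝ → ℝ) (Z : Set V) : Prop :=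
  ∃ m : ℝ → ℝ → ℝ, IsGauge δ o κ Z m

/-- `Z` is sublinearly Morse: `κ`-Morse for some sublinear `κ`. -/
def SublinearlyMorse (δ : V → V → ℝ) (o : V) (Z : Set V) : Prop :=
  ∃ κ : ℝ → ℝ, SublinearFun κ ∧ IsMorse δ o κ Z

/-- A geodesic ray in the graph metric, emanating from `o`. -/
def GraphGeodRay (G : SimpleGraph V) (o : V) (γ : ℕ → V) : Prop :=
  γ 0 = o ∧ ∀ m n : ℕ, (G.dist (γ m) (γ n) : ℤ) = |(m : ℤ) - (n : ℤ)|

/-- A `d_ω`-geodesic ray from `o` in the weighted graph `X_ω`: it follows edges of the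
graph and realizes the weighted distance along itself, and it goes to infinity. -/
def IsWGeodRay (G : SimpleGraph V) (w : Sym2 V → ℝ) (o : V) (v : ℕ → V) : Prop :=
  v 0 = o ∧ (∀ n : ℕ, G.Adj (v n) (v (n + 1))) ∧
    (∀ m n : ℕ, m ≤ n →
      wDist G w (v m) (v n) = ∑ k ∈ Finset.Ico m n, w s(v k, v (k + 1))) ∧
    Filter.Tendsto (fun n => wDist G w o (v n)) Filter.atTop Filter.atTop

open scoped Classical in
/-- The first point of the ray `f` at `δ`-distance at least `r` from `o`. -/
noncomputable def firstAt (δ : V → V → ℝ) (o : V) (f : ℕ → V) (r : ℝ) : V :=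
  if h : ∃ n : ℕ, r ≤ δ o (f n) then f (Nat.find h) else f 0

/-- Two rays sublinearly fellow travel: `δ(f_r, g_r)/r → 0`, where `f_r` denotes the
first point of `f` at `δ`-distance (at least) `r` from `o`. -/
def FellowTravel (δ : V → V → ℝ) (o : V) (f g : ℕ → V) : Prop :=
  Filter.Tendsto (fun r : ℝ => δ (firstAt δ o f r) (firstAt δ o g r) / r)
    Filter.atTop (nhds 0)


section Aux

variable {G : SimpleGraph V} {w : Sym2 V → ℝ} {u v x y : V}

lemma wLen_append (p : G.Walk u v) (q : G.Walk v x) :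
    wLen G w (p.append q) = wLen G w p + wLen G w q := by
  simp [wLen, SimpleGraph.Walk.edges_append]

lemma wLen_reverse (p : G.Walk u v) : wLen G w p.reverse = wLen G w p := by
  simp [wLen, SimpleGraph.Walk.edges_reverse, List.map_reverse, List.sum_reverse]

lemma wLen_copy (p : G.Walk u v) (h1 : u = x) (h2 : v = y) :
    wLen G w (p.copy h1 h2) = wLen G w p := by
  simp [wLen, SimpleGraph.Walk.edges_copy]

lemma wLen_nonneg (hw : ∀ e ∈ G.edgeSet, 0 ≤ w e) (p : G.Walk u v) : 0 ≤ wLen G w p := by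
  apply List.sum_nonneg
  intro a ha
  obtain ⟨e, he, rfl⟩ := List.mem_map.1 ha
  exact hw e (p.edges_subset_edgeSet he)

lemma not_bddBelow_of_neg (hconn : G.Connected) (e : Sym2 V) (he : e ∈ G.edgeSet)
    (hneg : w e < 0) (u v : V) :
    ¬ BddBelow {s : ℝ | ∃ p : G.Walk u v, s = wLen G w p} := by
  induction e with
  | _ x y =>
    have hadj : G.Adj x y := he
    rintro ⟨c, hc⟩
    -- loop of weight 2 * w s(x,y)
    set ell : G.Walk x x := SimpleGraph.Walk.cons hadj (SimpleGraph.Walk.cons hadj.symm .nil)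
      with hell
    have hl : wLen G w ell = 2 * w s(x, y) := by
      simp [wLen, hell, Sym2.eq_swap (a := y) (b := x)]
      ring
    have hloop : ∀ n : ℕ, ∃ q : G.Walk x x, wLen G w q = n * (2 * w s(x, y)) := by
      intro n
      induction n with
      | zero => exact ⟨.nil, by simp [wLen]⟩
      | succ n ih =>
        obtain ⟨q, hq⟩ := ih
        exact ⟨q.append ell, by rw [wLen_append, hq, hl]; push_cast; ring⟩
    obtain ⟨r1⟩ := hconn u x
    obtain ⟨r2⟩ := hconn x v
    obtain ⟨n, hn⟩ := exists_nat_gt ((wLen G w r1 + wLen G w r2 - c) / (-(2 * w s(x, y))))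
    obtain ⟨q, hq⟩ := hloop n
    have hmem : wLen G w (r1.append (q.append r2)) ∈
        {s : ℝ | ∃ p : G.Walk u v, s = wLen G w p} := ⟨_, rfl⟩
    have := hc hmem
    rw [wLen_append, wLen_append, hq] at this
    have hpos : (0:ℝ) < -(2 * w s(x, y)) := by linarith
    rw [div_lt_iff₀ hpos] at hn
    nlinarith

lemma wDist_nonneg (hconn : G.Connected) (w : Sym2 V → ℝ) (u v : V) :
    0 ≤ wDist G w u v := by
  by_cases hw : ∀ e ∈ G.edgeSet, 0 ≤ w e
  · exact Real.sInf_nonneg (fun s hs => by obtain ⟨p, rfl⟩ := hs; exact wLen_nonneg hw p)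
  · push_neg at hw
    obtain ⟨e, he, hneg⟩ := hw
    rw [wDist, Real.sInf_of_not_bddBelow (not_bddBelow_of_neg hconn e he hneg u v)]

lemma wDist_le_max (p : G.Walk u v) : wDist G w u v ≤ max (wLen G w p) 0 := by
  by_cases hbdd : BddBelow {s : ℝ | ∃ p : G.Walk u v, s = wLen G w p}
  · exact le_trans (csInf_le hbdd ⟨p, rfl⟩) (le_max_left _ _)
  · rw [wDist, Real.sInf_of_not_bddBelow hbdd]; exact le_max_right _ _

/-- Walk along a ray from `γ a` to `γ (a+n)`. -/
def rayWalk (G : SimpleGraph V) (γ : ℕ → V) (h : ∀ i, G.Adj (γ i) (γ (i+1))) (a : ℕ) :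
    (n : ℕ) → G.Walk (γ a) (γ (a+n))
  | 0 => .nil
  | (n+1) => (rayWalk G γ h a n).append (.cons (h (a+n)) .nil)

lemma wLen_rayWalk (γ : ℕ → V) (h : ∀ i, G.Adj (γ i) (γ (i+1))) (a n : ℕ) :
    wLen G w (rayWalk G γ h a n) = ∑ i ∈ Finset.range n, w s(γ (a+i), γ (a+i+1)) := by
  induction n with
  | zero => simp [rayWalk, wLen]
  | succ n ih =>
    rw [rayWalk, wLen_append, ih, Finset.sum_range_succ]
    simp [wLen]

open scoped Classical

/-- Accumulated deduplicated list of edges. -/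
noncomputable def chainL (pe : ℕ → List (Sym2 V)) : ℕ → List (Sym2 V)
  | 0 => (pe 0).dedup
  | (k+1) => chainL pe k ++ ((pe (k+1)).dedup.filter (fun e => decide (e ∉ chainL pe k)))

lemma chainL_nodup (pe : ℕ → List (Sym2 V)) (k : ℕ) : (chainL pe k).Nodup := by
  induction k with
  | zero => exact (pe 0).nodup_dedup
  | succ k ih =>
    rw [chainL]
    refine List.Nodup.append ih ((pe (k+1)).nodup_dedup.filter _) ?_
    intro a ha hb
    have := (List.mem_filter.1 hb).2
    simp only [decide_eq_true_eq] at this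
    exact this ha

lemma chainL_prefix (pe : ℕ → List (Sym2 V)) {k k' : ℕ} (h : k ≤ k') :
    chainL pe k <+: chainL pe k' := by
  induction k' with
  | zero => rw [Nat.le_zero.1 h]
  | succ k' ih =>
    rcases Nat.lt_or_ge k (k'+1) with h' | h'
    · exact (ih (Nat.lt_succ_iff.1 h')).trans ⟨_, rfl⟩
    · rw [Nat.le_antisymm h h']

lemma subset_chainL (pe : ℕ → List (Sym2 V)) (k : ℕ) {e : Sym2 V} (he : e ∈ pe k) :
    e ∈ chainL pe k := by
  cases k with
  | zero => exact (List.mem_dedup).2 he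
  | succ k =>
    rw [chainL, List.mem_append]
    by_cases h : e ∈ chainL pe k
    · exact Or.inl h
    · exact Or.inr (List.mem_filter.2 ⟨(List.mem_dedup).2 he, by simpa using h⟩)

lemma chainL_length (pe : ℕ → List (Sym2 V)) (k : ℕ) :
    (chainL pe k).length ≤ ∑ i ∈ Finset.range (k+1), (pe i).length := by
  induction k with
  | zero => simpa [chainL] using (pe 0).dedup_sublist.length_le
  | succ k ih =>
    rw [chainL, List.length_append, Finset.sum_range_succ]
    have h1 : (List.filter (fun e => decide (e ∉ chainL pe k)) (pe (k+1)).dedup).length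
        ≤ (pe (k+1)).length :=
      le_trans (List.length_filter_le _ _) (pe (k+1)).dedup_sublist.length_le
    omega

lemma exists_enum (L : ℕ → List (Sym2 V)) (hnodup : ∀ k, (L k).Nodup)
    (hpre : ∀ k k', k ≤ k' → L k <+: L k')
    (hsur : ∀ i, ∃ k, i < (L k).length) :
    ∃ ι : ℕ → Sym2 V, Function.Injective ι ∧
      ∀ k, (L k).toFinset = Finset.image ι (Finset.range (L k).length) := by
  classical
  choose f hf using hsur
  have key : ∀ i k (h : i < (L k).length), (L (f i))[i]'(hf i) = (L k)[i]'h := by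
    intro i k h
    rcases le_total (f i) k with hle | hle
    · exact (hpre _ _ hle).getElem (hf i)
    · exact ((hpre _ _ hle).getElem h).symm
  refine ⟨fun i => (L (f i))[i]'(hf i), ?_, ?_⟩
  · intro i j hij
    set k := max (f i) (f j) with hk
    have hi : i < (L k).length := lt_of_lt_of_le (hf i) ((hpre _ _ (le_max_left _ _)).length_le)
    have hj : j < (L k).length := lt_of_lt_of_le (hf j) ((hpre _ _ (le_max_right _ _)).length_le)
    have : (L k)[i]'hi = (L k)[j]'hj := by
      rw [← key i k hi, ← key j k hj]; exact hij
    exact List.Nodup.getElem_inj_iff (hnodup k) |>.1 this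
  · intro k
    ext e
    simp only [List.mem_toFinset, Finset.mem_image, Finset.mem_range]
    constructor
    · intro he
      obtain ⟨i, hi, hie⟩ := List.mem_iff_getElem.1 he
      exact ⟨i, hi, by rw [key i k hi]; exact hie⟩
    · rintro ⟨i, hi, rfl⟩
      rw [key i k hi]
      exact List.getElem_mem _

/-- Geometric-like scale sequence with relative gaps `~ 1/(m+1)`. -/
def scaleSeq (m : ℕ) : ℕ → ℕ
  | 0 => 2*(m+1)
  | (k+1) => scaleSeq m k + scaleSeq m k/(m+1) + 1

lemma scaleSeq_ge (m k : ℕ) : 2*(m+1) ≤ scaleSeq m k := by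
  induction k with
  | zero => simp [scaleSeq]
  | succ k ih =>
    rw [scaleSeq, Nat.add_assoc]
    exact le_trans ih (Nat.le_add_right _ _)

lemma scaleSeq_strictMono (m : ℕ) : StrictMono (scaleSeq m) := by
  apply strictMono_nat_of_lt_succ
  intro k
  rw [scaleSeq, Nat.add_assoc]
  exact Nat.lt_add_of_pos_right (Nat.succ_pos _)

lemma scaleSeq_succ_le (m k : ℕ) : scaleSeq m (k+1) ≤ 3 * scaleSeq m k := by
  have h1 : scaleSeq m k/(m+1) ≤ scaleSeq m k := Nat.div_le_self _ _
  have h2 : 1 ≤ scaleSeq m k := le_trans (by omega) (scaleSeq_ge m k)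
  rw [scaleSeq]
  omega

lemma div_helper (M s : ℕ) (hM : 0 < M) : (2*M+1)*s ≤ 2*M*(s + s/M + 1) := by
  have h1 : M*(s/M) + s % M = s := Nat.div_add_mod s M
  have h2 : s % M < M := Nat.mod_lt s hM
  have h5 : s ≤ 2*(M*(s/M)) + 2*M := by
    conv_lhs => rw [← h1]
    generalize M*(s/M) = x
    omega
  calc (2*M+1)*s = 2*M*s + s := by ring
    _ ≤ 2*M*s + (2*(M*(s/M)) + 2*M) := by omega
    _ = 2*M*(s + s/M + 1) := by ring

lemma scaleSeq_sum_le (m k : ℕ) :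
    ∑ i ∈ Finset.range (k+1), scaleSeq m i ≤ (2*(m+1)+1) * scaleSeq m k := by
  induction k with
  | zero => simp [scaleSeq]
  | succ k ih =>
    rw [Finset.sum_range_succ]
    have key : (2*(m+1)+1) * scaleSeq m k ≤ 2*(m+1) * scaleSeq m (k+1) := by
      have := div_helper (m+1) (scaleSeq m k) (Nat.succ_pos m)
      rw [scaleSeq]
      convert this using 2
    have hmono : scaleSeq m k ≤ scaleSeq m (k+1) := le_of_lt ((scaleSeq_strictMono m).lt_iff_lt.2 (Nat.lt_succ_self k))
    calc ∑ i ∈ Finset.range (k+1), scaleSeq m i + scaleSeq m (k+1)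
        ≤ (2*(m+1)+1) * scaleSeq m k + scaleSeq m (k+1) := by omega
      _ ≤ 2*(m+1) * scaleSeq m (k+1) + scaleSeq m (k+1) := by omega
      _ = (2*(m+1)+1) * scaleSeq m (k+1) := by ring

lemma scaleSeq_covers (m t : ℕ) (ht : scaleSeq m 0 ≤ t) :
    ∃ k, scaleSeq m k ≤ t ∧ t < scaleSeq m (k+1) := by
  have hub : ∀ k, k ≤ scaleSeq m k := fun k => (scaleSeq_strictMono m).le_apply
  set k := Nat.findGreatest (fun k => scaleSeq m k ≤ t) t with hk
  have hspec : scaleSeq m k ≤ t :=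
    Nat.findGreatest_spec (P := fun k => scaleSeq m k ≤ t) (Nat.zero_le t) ht
  refine ⟨k, hspec, ?_⟩
  by_contra hcon
  push_neg at hcon
  rcases Nat.lt_or_ge t (k+1) with h' | h'
  · have := hub (k+1); omega
  · exact (Nat.findGreatest_is_greatest (Nat.lt_succ_self k) h') hcon

lemma exists_linear_bound {S : ℕ → ℝ} {b : ℝ} (hb : 0 ≤ b)
    (h : Tendsto (fun n => S n / n) atTop (nhds b)) :
    ∃ C : ℝ, 0 ≤ C ∧ ∀ n, S n ≤ (b+1)*n + C := by
  have h1 : ∀ᶠ n : ℕ in atTop, |S n / n - b| < 1 := by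
    obtain ⟨N, hN⟩ := Metric.tendsto_atTop.1 h 1 one_pos
    exact eventually_atTop.2 ⟨N, fun n hn => by simpa [Real.dist_eq] using hN n hn⟩
  obtain ⟨N, hN⟩ := eventually_atTop.1 h1
  refine ⟨∑ i ∈ Finset.range (N+1), |S i|, Finset.sum_nonneg (fun i _ => abs_nonneg _), ?_⟩
  intro n
  rcases le_or_gt n N with hn | hn
  · have h2 : S n ≤ ∑ i ∈ Finset.range (N+1), |S i| := by
      calc S n ≤ |S n| := le_abs_self _
        _ ≤ _ := Finset.single_le_sum (f := fun i => |S i|) (fun i _ => abs_nonneg _)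
            (Finset.mem_range.2 (Nat.lt_succ_of_le hn))
    have h3 : (0:ℝ) ≤ (b+1)*n := by positivity
    linarith
  · have hn' := hN n hn.le
    have habs := (abs_lt.1 hn').2
    have hnpos : (0:ℝ) < n := by
      have : 0 < n := Nat.pos_of_ne_zero (by omega)
      exact_mod_cast this
    have h4 : S n / n < b + 1 := by linarith
    have h5 : S n ≤ (b+1)*n := by
      rw [div_lt_iff₀ hnpos] at h4
      linarith
    have h6 : (0:ℝ) ≤ ∑ i ∈ Finset.range (N+1), |S i| :=
      Finset.sum_nonneg (fun i _ => abs_nonneg _)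
    linarith

lemma eventually_le_mul {S : ℕ → ℝ} {b : ℝ} (h : Tendsto (fun n => S n / n) atTop (nhds b))
    {ε : ℝ} (hε : 0 < ε) :
    ∀ᶠ n : ℕ in atTop, S n ≤ (b+ε)*n ∧ (b-ε)*n ≤ S n := by
  obtain ⟨N, hN⟩ := Metric.tendsto_atTop.1 h ε hε
  refine eventually_atTop.2 ⟨max N 1, fun n hn => ?_⟩
  have hn1 : N ≤ n := le_trans (le_max_left _ _) hn
  have hnpos : (0:ℝ) < n := by
    have : 1 ≤ n := le_trans (le_max_right _ _) hn
    exact_mod_cast this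
  have := hN n hn1
  rw [Real.dist_eq, abs_lt] at this
  constructor
  · have h4 : S n / n < b + ε := by linarith
    rw [div_lt_iff₀ hnpos] at h4
    linarith
  · have h4 : b - ε < S n / n := by linarith
    rw [lt_div_iff₀ hnpos] at h4
    linarith

lemma sum_smallo {a s : ℕ → ℕ} {c : ℕ}
    (hsum : ∀ k, ∑ i ∈ Finset.range (k+1), s i ≤ c * s k)
    (hstop : Tendsto s atTop atTop)
    (h : Tendsto (fun k => (a k : ℝ) / (s k)) atTop (nhds 0))
    {ε : ℝ} (hε : 0 < ε) (hc : 0 < c) :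
    ∀ᶠ k : ℕ in atTop, ((∑ i ∈ Finset.range (k+1), a i : ℕ) : ℝ) ≤ ε * s k := by
  have hspos : ∀ᶠ k : ℕ in atTop, 0 < s k := hstop.eventually_gt_atTop 0
  set ε₁ := ε/(2*c) with hε₁
  have hε₁pos : 0 < ε₁ := by positivity
  have h1 : ∀ᶠ k : ℕ in atTop, (a k : ℝ) ≤ ε₁ * s k := by
    filter_upwards [Metric.tendsto_atTop.1 h ε₁ hε₁pos |>.choose_spec
        |> fun hN => eventually_atTop.2 ⟨_, hN⟩, hspos] with k hk hks
    have h' : (a k : ℝ)/(s k) < ε₁ := by simpa [Real.dist_eq] using hk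
    have hskpos : (0:ℝ) < s k := by exact_mod_cast hks
    rw [div_lt_iff₀ hskpos] at h'
    linarith
  obtain ⟨K, hK⟩ := eventually_atTop.1 h1
  -- CK := head sum
  set CK : ℝ := ∑ i ∈ Finset.range K, (a i : ℝ) with hCK
  have main : ∀ k, K ≤ k + 1 → ((∑ i ∈ Finset.range (k+1), a i : ℕ) : ℝ) ≤ CK + (ε/2) * s k := by
    intro k hKk
    have hsplit : ∑ i ∈ Finset.range K, (a i:ℝ) + ∑ i ∈ Finset.Ico K (k+1), (a i:ℝ)
        = ∑ i ∈ Finset.range (k+1), (a i:ℝ) := Finset.sum_range_add_sum_Ico _ hKk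
    have h2 : ∑ i ∈ Finset.Ico K (k+1), (a i:ℝ) ≤ ∑ i ∈ Finset.Ico K (k+1), ε₁ * s i :=
      Finset.sum_le_sum (fun i hi => hK i (Finset.mem_Ico.1 hi).1)
    have h3 : ∑ i ∈ Finset.Ico K (k+1), ε₁ * (s i:ℝ) ≤ ∑ i ∈ Finset.range (k+1), ε₁ * s i := by
      apply Finset.sum_le_sum_of_subset_of_nonneg
      · intro i hi
        exact Finset.mem_range.2 (Finset.mem_Ico.1 hi).2
      · intro i _ _
        positivity
    have h4 : ∑ i ∈ Finset.range (k+1), ε₁ * (s i:ℝ) = ε₁ * ∑ i ∈ Finset.range (k+1), (s i:ℝ) := by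
      rw [Finset.mul_sum]
    have h5 : (∑ i ∈ Finset.range (k+1), (s i:ℝ)) ≤ c * s k := by
      have := hsum k
      push_cast
      exact_mod_cast this
    have h6 : ε₁ * (∑ i ∈ Finset.range (k+1), (s i:ℝ)) ≤ ε₁ * (c * s k) := by
      apply mul_le_mul_of_nonneg_left h5 (le_of_lt hε₁pos)
    have h7 : ε₁ * ((c:ℝ) * s k) = (ε/2) * s k := by
      rw [hε₁]
      field_simp
    push_cast
    calc ∑ i ∈ Finset.range (k+1), (a i:ℝ)
        = CK + ∑ i ∈ Finset.Ico K (k+1), (a i:ℝ) := by rw [← hsplit]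
      _ ≤ CK + ε₁ * ∑ i ∈ Finset.range (k+1), (s i:ℝ) := by
          rw [← h4]; linarith
      _ ≤ CK + (ε/2) * s k := by rw [← h7]; linarith
  have hbig : ∀ᶠ k : ℕ in atTop, CK ≤ (ε/2) * s k := by
    have hCKnn : ∀ᶠ k : ℕ in atTop, (2/ε * CK) < s k := by
      have : Tendsto (fun k => (s k : ℝ)) atTop atTop := tendsto_natCast_atTop_atTop.comp hstop
      exact this.eventually_gt_atTop _
    filter_upwards [hCKnn] with k hk
    rw [div_mul_eq_mul_div, div_lt_iff₀ hε] at hk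
    linarith
  filter_upwards [hbig, eventually_atTop.2 ⟨K, fun n (hn : K ≤ n) => Nat.le_succ_of_le hn⟩]
    with k h8 h9
  have := main k h9
  linarith

lemma slln_coord {ν : Measure ℝ} [IsProbabilityMeasure ν]
    {P : Measure (Sym2 V → ℝ)} [IsProbabilityMeasure P]
    (hindep : iIndepFun (fun e (ω : Sym2 V → ℝ) => ω e) P)
    (hlaw : ∀ e : Sym2 V, P.map (fun ω => ω e) = ν)
    {b : ℝ} (hb : b = ∫ x, x ∂ν) (hint : Integrable id ν)
    (ι : ℕ → Sym2 V) (hι : Function.Injective ι) :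
    ∀ᵐ ω ∂P, Tendsto (fun n : ℕ => (∑ i ∈ Finset.range n, ω (ι i)) / (n:ℝ)) atTop (nhds b) := by
  set X : ℕ → (Sym2 V → ℝ) → ℝ := fun i ω => ω (ι i) with hX
  have hmeas : ∀ i, Measurable (X i) := fun i => measurable_pi_apply (ι i)
  have hint0 : Integrable (X 0) P := by
    have := (integrable_map_measure (μ := P) (f := fun ω : Sym2 V → ℝ => ω (ι 0)) (g := id)
      aestronglyMeasurable_id (hmeas 0).aemeasurable)
    rw [hlaw (ι 0)] at this
    exact this.1 hint
  have hpair : Pairwise (Function.onFun (IndepFun · · P) X) := by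
    intro i j hij
    exact hindep.indepFun (hι.ne hij)
  have hident : ∀ i, IdentDistrib (X i) (X 0) P P := by
    intro i
    exact ⟨(hmeas i).aemeasurable, (hmeas 0).aemeasurable, by rw [hX]; simp only; rw [hlaw, hlaw]⟩
  have hE : P[X 0] = b := by
    rw [hb]
    have : ∫ x, x ∂ν = ∫ x, id x ∂ν := rfl
    rw [this, ← hlaw (ι 0), integral_map (hmeas 0).aemeasurable aestronglyMeasurable_id]
    rfl
  have := strong_law_ae_real X hint0 hpair hident
  rw [hE] at this
  exact this

lemma ae_nonneg_coord {ν : Measure ℝ} [IsProbabilityMeasure ν]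
    {P : Measure (Sym2 V → ℝ)} [IsProbabilityMeasure P]
    (hlaw : ∀ e : Sym2 V, P.map (fun ω => ω e) = ν)
    (hsupp : ν (Set.Iio (0:ℝ)) = 0) (e : Sym2 V) :
    ∀ᵐ ω ∂P, 0 ≤ ω e := by
  have hm : Measurable fun ω : Sym2 V → ℝ => ω e := measurable_pi_apply e
  have hz : P {ω | ω e < 0} = 0 := by
    have h1 : {ω : Sym2 V → ℝ | ω e < 0} = (fun ω : Sym2 V → ℝ => ω e) ⁻¹' (Set.Iio 0) := rfl
    rw [h1, ← Measure.map_apply hm measurableSet_Iio, hlaw e, hsupp]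
  rw [ae_iff]
  convert hz using 2
  ext ω
  simp [not_le]

lemma mono_bdd_stab {n : ℕ → ℕ} (hmono : Monotone n) (B : ℕ) (hB : ∀ k, n k ≤ B) :
    ∃ K, ∀ k, K ≤ k → n k = n K := by
  have hne : (Set.range n).Nonempty := ⟨n 0, ⟨0, rfl⟩⟩
  have hbdd' : BddAbove (Set.range n) := ⟨B, by rintro x ⟨k, rfl⟩; exact hB k⟩
  obtain ⟨K, hK⟩ := Nat.sSup_mem hne hbdd'
  refine ⟨K, fun k hk => le_antisymm ?_ (hmono hk)⟩
  rw [hK]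
  exact le_csSup hbdd' ⟨k, rfl⟩

lemma pathcost_small {ν : Measure ℝ} [IsProbabilityMeasure ν]
    {P : Measure (Sym2 V → ℝ)} [IsProbabilityMeasure P]
    (hindep : iIndepFun (fun e (ω : Sym2 V → ℝ) => ω e) P)
    (hlaw : ∀ e : Sym2 V, P.map (fun ω => ω e) = ν)
    (hsupp : ν (Set.Iio (0:ℝ)) = 0)
    {b : ℝ} (hb : b = ∫ x, x ∂ν) (hint : Integrable id ν) (hb0 : 0 ≤ b)
    (s : ℕ → ℕ) (c : ℕ) (hc : 0 < c)
    (hsum : ∀ k, ∑ i ∈ Finset.range (k+1), s i ≤ c * s k)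
    (hstop : Tendsto s atTop atTop)
    (el : ℕ → List (Sym2 V)) (hnodup : ∀ k, (el k).Nodup)
    (hlen : Tendsto (fun k => ((el k).length : ℝ) / (s k)) atTop (nhds 0)) :
    ∀ᵐ ω ∂P, ∀ ε : ℝ, 0 < ε → ∀ᶠ k in atTop, ((el k).map ω).sum ≤ ε * s k := by
  classical
  set chain := chainL el with hchain
  set nch : ℕ → ℕ := fun k => (chain k).length with hnch
  have hchainnodup : ∀ k, (chain k).Nodup := chainL_nodup el
  have hchainpre : ∀ k k', k ≤ k' → chain k <+: chain k' := fun k k' h => chainL_prefix el h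
  have hchmono : Monotone nch := fun k k' h => (hchainpre k k' h).length_le
  -- the chain length is eventually small compared to s
  have hsmall : ∀ ε : ℝ, 0 < ε → ∀ᶠ k in atTop, ((nch k : ℕ) : ℝ) ≤ ε * s k := by
    intro ε hε
    have h1 := sum_smallo (a := fun i => (el i).length) hsum hstop hlen hε hc
    filter_upwards [h1] with k hk
    refine le_trans ?_ hk
    exact_mod_cast Nat.cast_le.2 (chainL_length el k)
  have hsinf : Tendsto (fun k => (s k : ℝ)) atTop atTop :=
    tendsto_natCast_atTop_atTop.comp hstop
  by_cases hsur : ∀ i, ∃ k, i < nch k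
  · -- infinitely many edges: enumeration and SLLN
    obtain ⟨ι, hι, himg⟩ := exists_enum chain hchainnodup hchainpre hsur
    have hslln := slln_coord hindep hlaw hb hint ι hι
    have hnn : ∀ᵐ ω ∂P, ∀ i : ℕ, 0 ≤ ω (ι i) :=
      ae_all_iff.2 (fun i => ae_nonneg_coord hlaw hsupp (ι i))
    filter_upwards [hslln, hnn] with ω hT hωnn
    intro ε hε
    obtain ⟨C, hC0, hCbound⟩ := exists_linear_bound hb0 hT
    have hb1 : (0:ℝ) < b + 1 := by linarith
    have hε' : 0 < ε/(2*(b+1)) := by positivity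
    have hev1 := hsmall _ hε'
    have hev2 : ∀ᶠ k : ℕ in atTop, C ≤ (ε/2) * s k := by
      filter_upwards [hsinf.eventually_ge_atTop ((2/ε) * C)] with k hk
      rw [div_mul_eq_mul_div, div_le_iff₀ hε] at hk
      linarith
    filter_upwards [hev1, hev2] with k hk1 hk2
    -- pointwise chain of inequalities
    have e1 : ((el k).map ω).sum = ∑ e ∈ (el k).toFinset, ω e :=
      (List.sum_toFinset _ (hnodup k)).symm
    have e2 : ∑ e ∈ (el k).toFinset, ω e ≤ ∑ e ∈ (chain k).toFinset, ω e := by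
      apply Finset.sum_le_sum_of_subset_of_nonneg
      · intro e he
        exact List.mem_toFinset.2 (subset_chainL el k (List.mem_toFinset.1 he))
      · intro e he _
        have : e ∈ Finset.image ι (Finset.range (nch k)) := by rw [← himg k]; exact he
        obtain ⟨i, _, rfl⟩ := Finset.mem_image.1 this
        exact hωnn i
    have e3 : ∑ e ∈ (chain k).toFinset, ω e = ∑ i ∈ Finset.range (nch k), ω (ι i) := by
      rw [himg k, Finset.sum_image (fun a _ a' _ h => hι h)]
    have e4 : ∑ i ∈ Finset.range (nch k), ω (ι i) ≤ (b+1) * (nch k) + C := hCbound (nch k)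
    have e5 : (b+1) * ((nch k : ℕ):ℝ) ≤ (b+1) * ((ε/(2*(b+1))) * s k) :=
      mul_le_mul_of_nonneg_left hk1 (le_of_lt hb1)
    have e6 : (b+1) * ((ε/(2*(b+1))) * (s k:ℝ)) = (ε/2) * s k := by
      field_simp
    calc ((el k).map ω).sum = ∑ e ∈ (el k).toFinset, ω e := e1
      _ ≤ ∑ e ∈ (chain k).toFinset, ω e := e2
      _ = ∑ i ∈ Finset.range (nch k), ω (ι i) := e3
      _ ≤ (b+1) * (nch k) + C := e4
      _ ≤ (ε/2) * s k + (ε/2) * s k := by rw [← e6]; linarith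
      _ = ε * s k := by ring
  · -- finitely many edges: the chain stabilizes
    push_neg at hsur
    obtain ⟨i0, hi0⟩ := hsur
    obtain ⟨K, hK⟩ := mono_bdd_stab hchmono i0 hi0
    have hKeq : ∀ k, K ≤ k → chain k = chain K := by
      intro k hk
      exact ((hchainpre K k hk).eq_of_length (hK k hk).symm).symm
    have hnnK : ∀ᵐ ω ∂P, ∀ e ∈ chain K, 0 ≤ ω e := by
      have : ∀ (l : List (Sym2 V)), ∀ᵐ ω ∂P, ∀ e ∈ l, 0 ≤ ω e := by
        intro l
        induction l with
        | nil => filter_upwards with ω e he; simp at he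
        | cons a l ih =>
          filter_upwards [ae_nonneg_coord hlaw hsupp a, ih] with ω h1 h2 e he
          rcases List.mem_cons.1 he with rfl | he
          · exact h1
          · exact h2 e he
      exact this (chain K)
    filter_upwards [hnnK] with ω hωnn
    intro ε hε
    set Cst : ℝ := ∑ e ∈ (chain K).toFinset, ω e with hCst
    have hev : ∀ᶠ k : ℕ in atTop, Cst ≤ ε * s k := by
      filter_upwards [hsinf.eventually_ge_atTop ((1/ε) * Cst)] with k hk
      rw [div_mul_eq_mul_div, div_le_iff₀ hε] at hk
      linarith
    filter_upwards [hev, eventually_ge_atTop K] with k hk1 hk2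
    have e1 : ((el k).map ω).sum = ∑ e ∈ (el k).toFinset, ω e :=
      (List.sum_toFinset _ (hnodup k)).symm
    have e2 : ∑ e ∈ (el k).toFinset, ω e ≤ ∑ e ∈ (chain k).toFinset, ω e := by
      apply Finset.sum_le_sum_of_subset_of_nonneg
      · intro e he
        exact List.mem_toFinset.2 (subset_chainL el k (List.mem_toFinset.1 he))
      · intro e he _
        apply hωnn
        rw [← hKeq k hk2]
        exact List.mem_toFinset.1 he
    rw [e1]
    refine le_trans e2 ?_
    rw [hKeq k hk2]
    exact hk1

lemma core_estimate {G : SimpleGraph V} (hconn : G.Connected)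
    (w : Sym2 V → ℝ) {b : ℝ} (hb0 : 0 ≤ b)
    {α β : ℕ → V} (hαadj : ∀ i, G.Adj (α i) (α (i+1))) (hβadj : ∀ i, G.Adj (β i) (β (i+1)))
    (m : ℕ)
    (p : (k : ℕ) → G.Walk (α (scaleSeq m k)) (β (scaleSeq m k)))
    (hA : Tendsto (fun n : ℕ => (∑ i ∈ Finset.range n, w s(α i, α (i+1))) / (n:ℝ)) atTop (nhds b))
    (hB : Tendsto (fun n : ℕ => (∑ i ∈ Finset.range n, w s(β i, β (i+1))) / (n:ℝ)) atTop (nhds b))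
    (hC : ∀ ε : ℝ, 0 < ε → ∀ᶠ k in atTop, wLen G w (p k) ≤ ε * scaleSeq m k) :
    ∀ᶠ t : ℕ in atTop, wDist G w (α t) (β t) ≤ ((2*b+5)/(m+1)) * t := by
  have hM : (0:ℝ) < (m:ℝ)+1 := by positivity
  have hMinv : (0:ℝ) < 1/((m:ℝ)+1) := by positivity
  obtain ⟨NA, hNA⟩ := eventually_atTop.1 (eventually_le_mul hA hMinv)
  obtain ⟨NB, hNB⟩ := eventually_atTop.1 (eventually_le_mul hB hMinv)
  obtain ⟨K₁, hK₁⟩ := eventually_atTop.1 (hC _ hMinv)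
  set N₁ := max NA NB with hN₁
  refine eventually_atTop.2 ⟨max (3*N₁+3) (scaleSeq m (K₁+1)), fun t ht => ?_⟩
  have ht1 : 3*N₁+3 ≤ t := le_trans (le_max_left _ _) ht
  have ht2 : scaleSeq m (K₁+1) ≤ t := le_trans (le_max_right _ _) ht
  have ht0 : scaleSeq m 0 ≤ t :=
    le_trans (((scaleSeq_strictMono m).monotone (Nat.zero_le _))) ht2
  obtain ⟨k, hsk, hsk'⟩ := scaleSeq_covers m t ht0
  -- k is large
  have hkK : K₁ ≤ k := by
    by_contra hcon
    push_neg at hcon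
    have : scaleSeq m (k+1) ≤ scaleSeq m (K₁+1) :=
      (scaleSeq_strictMono m).monotone (Nat.succ_le_succ (le_of_lt hcon))
    omega
  have hskN : N₁ ≤ scaleSeq m k := by
    have h3 : t < 3 * scaleSeq m k := lt_of_lt_of_le hsk' (scaleSeq_succ_le m k)
    omega
  have htN : N₁ ≤ t := le_trans hskN hsk
  -- real versions
  set sk := scaleSeq m k with hskdef
  have hgapℕ : t - sk ≤ sk/(m+1) := by
    have : scaleSeq m (k+1) = sk + sk/(m+1) + 1 := rfl
    omega
  have hgapR : (t:ℝ) - sk ≤ (t:ℝ)/((m:ℝ)+1) := by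
    have h1 : ((sk/(m+1) : ℕ):ℝ) ≤ (sk:ℝ)/(((m:ℕ):ℝ)+1) := by
      have := Nat.cast_div_le (α := ℝ) (m := sk) (n := m+1)
      push_cast at this ⊢
      exact this
    have h2 : ((t - sk : ℕ):ℝ) ≤ ((sk/(m+1):ℕ):ℝ) := Nat.cast_le.2 hgapℕ
    have h3 : (t:ℝ) - sk ≤ ((t - sk : ℕ):ℝ) := by
      rw [Nat.cast_sub hsk]
    have h4 : (sk:ℝ)/((m:ℝ)+1) ≤ (t:ℝ)/((m:ℝ)+1) := by
      gcongr

    push_cast at h1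
    linarith [h3.trans (h2.trans (h1.trans h4))]
  -- the walk
  have hteq : sk + (t - sk) = t := Nat.add_sub_cancel' hsk
  set WA := (rayWalk G α hαadj sk (t - sk)).copy rfl (congrArg α hteq) with hWA
  set WB := (rayWalk G β hβadj sk (t - sk)).copy rfl (congrArg β hteq) with hWB
  set W := WA.reverse.append ((p k).append WB) with hW
  have hlenW : wLen G w W = wLen G w WA + wLen G w (p k) + wLen G w WB := by
    rw [hW, wLen_append, wLen_append, wLen_reverse]
    ring
  -- ray sums
  have hsumA : wLen G w WA = (∑ i ∈ Finset.range t, w s(α i, α (i+1)))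
      - (∑ i ∈ Finset.range sk, w s(α i, α (i+1))) := by
    rw [hWA, wLen_copy, wLen_rayWalk]
    rw [← Finset.sum_Ico_eq_sub _ hsk, Finset.sum_Ico_eq_sum_range]
  have hsumB : wLen G w WB = (∑ i ∈ Finset.range t, w s(β i, β (i+1)))
      - (∑ i ∈ Finset.range sk, w s(β i, β (i+1))) := by
    rw [hWB, wLen_copy, wLen_rayWalk]
    rw [← Finset.sum_Ico_eq_sub _ hsk, Finset.sum_Ico_eq_sum_range]
  -- bounds
  have hAb := hNA t (le_trans (le_max_left _ _) htN)
  have hAb' := hNA sk (le_trans (le_max_left _ _) hskN)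
  have hBb := hNB t (le_trans (le_max_right _ _) htN)
  have hBb' := hNB sk (le_trans (le_max_right _ _) hskN)
  have hskt : (sk:ℝ) ≤ t := by exact_mod_cast hsk
  have htpos : (0:ℝ) ≤ t := Nat.cast_nonneg t
  have hboundA : wLen G w WA ≤ (b+2) * t/((m:ℝ)+1) := by
    rw [hsumA]
    have h1 : (∑ i ∈ Finset.range t, w s(α i, α (i+1))) ≤ (b + 1/((m:ℝ)+1)) * t := hAb.1
    have h2 : (b - 1/((m:ℝ)+1)) * sk ≤ ∑ i ∈ Finset.range sk, w s(α i, α (i+1)) := hAb'.2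
    have h3 : b * ((t:ℝ) - sk) ≤ b * (t/((m:ℝ)+1)) := mul_le_mul_of_nonneg_left hgapR hb0
    have h4 : 1/((m:ℝ)+1) * t + 1/((m:ℝ)+1) * sk ≤ 2/((m:ℝ)+1) * t := by
      have h5 : 1/((m:ℝ)+1) * sk ≤ 1/((m:ℝ)+1) * t := mul_le_mul_of_nonneg_left hskt (le_of_lt hMinv)
      have h6 : 2/((m:ℝ)+1)*(t:ℝ) = 1/((m:ℝ)+1)*t + 1/((m:ℝ)+1)*t := by ring
      rw [h6]
      linarith
    have expand : (b + 1/((m:ℝ)+1)) * t - (b - 1/((m:ℝ)+1)) * sk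
        = b * ((t:ℝ) - sk) + (1/((m:ℝ)+1) * t + 1/((m:ℝ)+1) * sk) := by ring
    have final : b * (t/((m:ℝ)+1)) + 2/((m:ℝ)+1) * t = (b+2) * t/((m:ℝ)+1) := by ring
    linarith
  have hboundB : wLen G w WB ≤ (b+2) * t/((m:ℝ)+1) := by
    rw [hsumB]
    have h1 : (∑ i ∈ Finset.range t, w s(β i, β (i+1))) ≤ (b + 1/((m:ℝ)+1)) * t := hBb.1
    have h2 : (b - 1/((m:ℝ)+1)) * sk ≤ ∑ i ∈ Finset.range sk, w s(β i, β (i+1)) := hBb'.2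
    have h3 : b * ((t:ℝ) - sk) ≤ b * (t/((m:ℝ)+1)) := mul_le_mul_of_nonneg_left hgapR hb0
    have h4 : 1/((m:ℝ)+1) * t + 1/((m:ℝ)+1) * sk ≤ 2/((m:ℝ)+1) * t := by
      have h5 : 1/((m:ℝ)+1) * sk ≤ 1/((m:ℝ)+1) * t := mul_le_mul_of_nonneg_left hskt (le_of_lt hMinv)
      have h6 : 2/((m:ℝ)+1)*(t:ℝ) = 1/((m:ℝ)+1)*t + 1/((m:ℝ)+1)*t := by ring
      rw [h6]
      linarith
    have expand : (b + 1/((m:ℝ)+1)) * t - (b - 1/((m:ℝ)+1)) * sk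
        = b * ((t:ℝ) - sk) + (1/((m:ℝ)+1) * t + 1/((m:ℝ)+1) * sk) := by ring
    have final : b * (t/((m:ℝ)+1)) + 2/((m:ℝ)+1) * t = (b+2) * t/((m:ℝ)+1) := by ring
    linarith
  have hboundC : wLen G w (p k) ≤ (t:ℝ)/((m:ℝ)+1) := by
    have := hK₁ k hkK
    have h2 : 1/((m:ℝ)+1) * sk ≤ 1/((m:ℝ)+1) * t := mul_le_mul_of_nonneg_left hskt (le_of_lt hMinv)
    calc wLen G w (p k) ≤ 1/((m:ℝ)+1) * sk := this
      _ ≤ 1/((m:ℝ)+1) * t := h2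
      _ = (t:ℝ)/((m:ℝ)+1) := by ring
  have htotal : wLen G w W ≤ ((2*b+5)/((m:ℝ)+1)) * t := by
    rw [hlenW]
    have : (b+2) * (t:ℝ)/((m:ℝ)+1) + (t:ℝ)/((m:ℝ)+1) + (b+2) * t/((m:ℝ)+1)
        = ((2*b+5)/((m:ℝ)+1)) * t := by ring
    linarith
  have hrhs : (0:ℝ) ≤ ((2*b+5)/((m:ℝ)+1)) * t := by positivity
  calc wDist G w (α t) (β t) ≤ max (wLen G w W) 0 := wDist_le_max W
    _ ≤ ((2*b+5)/((m:ℝ)+1)) * t := max_le htotal hrhs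

end Aux

/-- If two geodesic rays from `o` sublinearly fellow travel in the graph
metric, then almost surely they sublinearly fellow travel in the weighted metric `d_ω`
(assuming the edge-weight distribution has finite mean). Consequently sublinear fellow
traveling is a.s. preserved by FPP. -/
theorem fpp_preserves_sublinear_fellow_traveling {V : Type*} (G : SimpleGraph V)
    (o : V) (hconn : G.Connected)
    (ν : Measure ℝ) [IsProbabilityMeasure ν]
    (P : Measure (Sym2 V → ℝ)) [IsProbabilityMeasure P]
    (hindep : iIndepFun (fun e (ω : Sym2 V → ℝ) => ω e) P)
    (hlaw : ∀ e : Sym2 V, P.map (fun ω => ω e) = ν)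
    (hsupp : ν (Set.Iio (0 : ℝ)) = 0)
    (b : ℝ) (hb : b = ∫ x, x ∂ν) (hint : Integrable id ν)
    (α β : ℕ → V) (hα : GraphGeodRay G o α) (hβ : GraphGeodRay G o β)
    (hft : Filter.Tendsto (fun t : ℕ => (G.dist (α t) (β t) : ℝ) / t)
      Filter.atTop (nhds 0)) :
    ∀ᵐ ω ∂P, Filter.Tendsto (fun t : ℕ => wDist G ω (α t) (β t) / t)
      Filter.atTop (nhds 0) := by
  classical
  have hb0 : 0 ≤ b := by
    rw [hb]
    apply integral_nonneg_of_ae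
    have hae : ∀ᵐ x ∂ν, 0 ≤ x := by
      rw [ae_iff]
      convert hsupp using 2
      ext x
      simp [not_le]
    exact hae
  -- injectivity and adjacency along the rays
  have hrayinj : ∀ γ : ℕ → V, GraphGeodRay G o γ → Function.Injective γ := by
    intro γ hγ i j hij
    have h1 := hγ.2 i j
    rw [hij, SimpleGraph.dist_self] at h1
    have h2 : |(i:ℤ) - j| = 0 := by exact_mod_cast h1.symm
    have := abs_eq_zero.1 h2
    omega
  have hrayadj : ∀ γ : ℕ → V, GraphGeodRay G o γ → ∀ i, G.Adj (γ i) (γ (i+1)) := by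
    intro γ hγ i
    rw [← SimpleGraph.dist_eq_one_iff_adj]
    have h1 := hγ.2 i (i+1)
    push_cast at h1
    have h2 : |(i:ℤ) - ((i:ℤ)+1)| = 1 := by
      have h3 : (i:ℤ) - ((i:ℤ)+1) = -1 := by ring
      rw [h3]
      simp
    rw [h2] at h1
    exact_mod_cast h1
  have hαinj := hrayinj α hα
  have hβinj := hrayinj β hβ
  have hαadj := hrayadj α hα
  have hβadj := hrayadj β hβ
  -- injectivity of edge sequences along the rays
  have hedgeinj : ∀ γ : ℕ → V, Function.Injective γ →
      Function.Injective (fun i : ℕ => s(γ i, γ (i+1))) := by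
    intro γ hγinj i j hij
    simp only [Sym2.eq, Sym2.rel_iff', Prod.mk.injEq, Prod.swap_prod_mk] at hij
    rcases hij with ⟨h1, _⟩ | ⟨h1, h2⟩
    · exact hγinj h1
    · have e1 : i = j + 1 := hγinj h1
      have e2 : i + 1 = j := hγinj h2
      omega
  -- strong law along the two rays
  have hAae := slln_coord hindep hlaw hb hint _ (hedgeinj α hαinj)
  have hBae := slln_coord hindep hlaw hb hint _ (hedgeinj β hβinj)
  -- choice of geodesic paths at the scales
  have hpm : ∀ m k : ℕ, ∃ q : G.Walk (α (scaleSeq m k)) (β (scaleSeq m k)),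
      q.edges.Nodup ∧ q.length ≤ G.dist (α (scaleSeq m k)) (β (scaleSeq m k)) := by
    intro m k
    obtain ⟨q, hq⟩ := hconn.exists_walk_length_eq_dist (α (scaleSeq m k)) (β (scaleSeq m k))
    exact ⟨q.bypass, q.bypass_isPath.edges_nodup, by rw [← hq]; exact q.length_bypass_le⟩
  choose p hpnodup hplen using hpm
  -- the path cost lemma, for each m
  have hstop : ∀ m : ℕ, Tendsto (scaleSeq m) atTop atTop :=
    fun m => (scaleSeq_strictMono m).tendsto_atTop
  have hCm : ∀ m : ℕ, ∀ᵐ ω ∂P, ∀ ε : ℝ, 0 < ε →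
      ∀ᶠ k in atTop, (((p m k).edges.map ω).sum) ≤ ε * scaleSeq m k := by
    intro m
    apply pathcost_small hindep hlaw hsupp hb hint hb0 (scaleSeq m) (2*(m+1)+1)
      (by omega) (scaleSeq_sum_le m) (hstop m) (fun k => (p m k).edges)
      (fun k => hpnodup m k)
    -- edge-count smallness
    have hdist : Tendsto (fun k => ((G.dist (α (scaleSeq m k)) (β (scaleSeq m k)) : ℝ))
        / (scaleSeq m k : ℝ)) atTop (nhds 0) := hft.comp (hstop m)
    apply squeeze_zero (fun k => by positivity) ?_ hdist
    intro k
    have h1 : ((p m k).edges.length : ℝ) ≤ (G.dist (α (scaleSeq m k)) (β (scaleSeq m k)) : ℝ) := by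
      rw [SimpleGraph.Walk.length_edges]
      exact_mod_cast hplen m k
    gcongr
  -- combine all almost-sure events
  filter_upwards [hAae, hBae, ae_all_iff.2 hCm] with ω hAω hBω hCω
  rw [Metric.tendsto_atTop]
  intro ε hε
  obtain ⟨m, hm⟩ := exists_nat_gt ((2*b+5)/ε)
  have hmlt : (2*b+5)/((m:ℝ)+1) < ε := by
    rw [div_lt_iff₀ (by positivity : (0:ℝ) < (m:ℝ)+1)]
    rw [div_lt_iff₀ hε] at hm
    linarith
  have hcore := core_estimate hconn ω hb0 hαadj hβadj m (p m) hAω hBω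
    (fun ε' hε' => hCω m ε' hε')
  obtain ⟨N, hN⟩ := eventually_atTop.1 hcore
  refine ⟨max N 1, fun n hn => ?_⟩
  have hn1 : N ≤ n := le_trans (le_max_left _ _) hn
  have hnpos : (0:ℝ) < n := by
    have : 1 ≤ n := le_trans (le_max_right _ _) hn
    exact_mod_cast this
  have hwd := hN n hn1
  have hge := wDist_nonneg hconn ω (α n) (β n)
  rw [Real.dist_eq, sub_zero, abs_of_nonneg (div_nonneg hge (le_of_lt hnpos))]
  have h2 : wDist G ω (α n) (β n) / n ≤ ((2*b+5)/((m:ℝ)+1) * n) / n := by gcongr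
  rw [mul_div_assoc, div_self (ne_of_gt hnpos), mul_one] at h2
  exact lt_of_le_of_lt h2 hmlt
end FPPx
end

section
/- Let X be an infinite connected graph with bounded vertex degree, basepoint vertex o, and assume ν({0}) = 0. Let γ be any set of vertices of X and let c₁ > 0. Set D = 1/c₁ and let c = c(D) > 0 be the constant from the FPP lower-bound proposition. Then for P-almost every ω there exists r₁ = r₁(ω) such that every vertex x satisfying d(x, γ) ≥ c₁·d(o, x) (in the graph metric) also satisfies d_ω(x, γ) ≥ c·c₁·d(o, x) − r₁. In particular, points that are linearly far from γ in X remain, almost surely, linearly far (up to an additive constant) from γ in X_ω. -/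
open MeasureTheory ProbabilityTheory Filter Set

namespace FPPx

variable {V : Type*}

section Helpers

open SimpleGraph

variable {V : Type*} [DecidableEq V]

/-- Neighbor finset. -/
noncomputable def nbrF (G : SimpleGraph V) (hfin : ∀ v : V, (G.neighborSet v).Finite) (v : V) :
    Finset V := (hfin v).toFinset

/-- Finset of supports (vertex lists, listed from the far end towards the base) of walks of
length `n` ending in `B`. -/
noncomputable def chains (G : SimpleGraph V) (hfin : ∀ v : V, (G.neighborSet v).Finite)
    (B : Finset V) : ℕ → Finset (List V)
  | 0 => B.image (fun v => [v])
  | (n+1) => (chains G hfin B n).biUnion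
      (fun l => (l.head?.elim ∅ (nbrF G hfin)).image (fun w => w :: l))

lemma card_chains_le (G : SimpleGraph V) (hfin : ∀ v : V, (G.neighborSet v).Finite)
    (B : Finset V) (q : ℕ) (hq : ∀ v, (nbrF G hfin v).card ≤ q) :
    ∀ n : ℕ, (chains G hfin B n).card ≤ B.card * q ^ n := by
  intro n
  induction n with
  | zero => simpa [chains] using Finset.card_image_le
  | succ n ih =>
    rw [chains]
    refine Finset.card_biUnion_le.trans ?_
    calc ∑ l ∈ chains G hfin B n, ((l.head?.elim ∅ (nbrF G hfin)).image (fun w => w :: l)).card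
        ≤ ∑ _l ∈ chains G hfin B n, q := by
          refine Finset.sum_le_sum fun l _ => Finset.card_image_le.trans ?_
          cases l.head? with
          | none => simp
          | some a => exact hq a
      _ = (chains G hfin B n).card * q := by rw [Finset.sum_const, smul_eq_mul]
      _ ≤ (B.card * q ^ n) * q := by exact Nat.mul_le_mul_right q ih
      _ = B.card * q ^ (n + 1) := by ring

lemma length_of_mem_chains (G : SimpleGraph V) (hfin : ∀ v : V, (G.neighborSet v).Finite)
    (B : Finset V) : ∀ n : ℕ, ∀ l ∈ chains G hfin B n, l.length = n + 1 := by
  intro n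
  induction n with
  | zero =>
    intro l hl
    simp only [chains, Finset.mem_image] at hl
    obtain ⟨v, _, rfl⟩ := hl
    rfl
  | succ n ih =>
    intro l hl
    simp only [chains, Finset.mem_biUnion, Finset.mem_image] at hl
    obtain ⟨l', hl', w, _, rfl⟩ := hl
    simp [ih l' hl']

lemma support_mem_chains (G : SimpleGraph V) (hfin : ∀ v : V, (G.neighborSet v).Finite)
    {B : Finset V} : ∀ {u v : V} (p : G.Walk u v), v ∈ B →
    p.support ∈ chains G hfin B p.length := by
  intro u v p
  induction p with
  | nil =>
    intro h
    simp only [Walk.support_nil, Walk.length_nil, chains, Finset.mem_image]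
    exact ⟨_, h, rfl⟩
  | @cons u u' v h q ih =>
    intro hv
    rw [Walk.support_cons, Walk.length_cons]
    show _ ∈ chains G hfin B (q.length + 1)
    rw [chains]
    refine Finset.mem_biUnion.2 ⟨q.support, ih hv, ?_⟩
    have hh : q.support.head? = some u' := by rw [q.support_eq_cons]; rfl
    rw [hh]
    refine Finset.mem_image.2 ⟨u, ?_, rfl⟩
    simp only [Option.elim, nbrF, Set.Finite.mem_toFinset, mem_neighborSet]
    exact h.symm

/-- Finset containing the ball of radius `R` about `o`. -/
noncomputable def ballF (G : SimpleGraph V) (hfin : ∀ v : V, (G.neighborSet v).Finite)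
    (o : V) (R : ℕ) : Finset V :=
  (Finset.range (R+1)).biUnion (fun m => (chains G hfin {o} m).image (fun l => l.head?.getD o))

lemma mem_ballF (G : SimpleGraph V) (hfin : ∀ v : V, (G.neighborSet v).Finite)
    (o : V) {x : V} (hre : G.Reachable o x) {R : ℕ} (hR : G.dist o x ≤ R) :
    x ∈ ballF G hfin o R := by
  obtain ⟨p, hp⟩ := hre.exists_walk_length_eq_dist
  have h1 : p.reverse.support ∈ chains G hfin {o} (p.reverse.length) :=
    support_mem_chains G hfin p.reverse (Finset.mem_singleton_self o)
  rw [Walk.length_reverse, hp] at h1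
  refine Finset.mem_biUnion.2 ⟨G.dist o x, Finset.mem_range.2 (by omega), ?_⟩
  refine Finset.mem_image.2 ⟨p.reverse.support, h1, ?_⟩
  rw [p.reverse.support_eq_cons]
  rfl

lemma card_ballF_le (G : SimpleGraph V) (hfin : ∀ v : V, (G.neighborSet v).Finite)
    (o : V) (R : ℕ) (q : ℕ) (hq : ∀ v, (nbrF G hfin v).card ≤ q) :
    (ballF G hfin o R).card ≤ (R + 1) * (q + 1) ^ R := by
  refine Finset.card_biUnion_le.trans ?_
  calc ∑ m ∈ Finset.range (R+1), ((chains G hfin {o} m).image (fun l => l.head?.getD o)).card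
      ≤ ∑ _m ∈ Finset.range (R+1), (q+1)^R := by
        refine Finset.sum_le_sum fun m hm => Finset.card_image_le.trans ?_
        calc (chains G hfin {o} m).card ≤ ({o} : Finset V).card * q ^ m :=
              card_chains_le G hfin _ q hq m
          _ = q ^ m := by simp
          _ ≤ (q+1) ^ m := Nat.pow_le_pow_left (by omega) m
          _ ≤ (q+1) ^ R := Nat.pow_le_pow_right (by omega) (by
              exact Nat.lt_succ_iff.mp (Finset.mem_range.mp hm))
    _ = (R + 1) * (q + 1) ^ R := by rw [Finset.sum_const, smul_eq_mul, Finset.card_range]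

/-- The edge list of a vertex list. -/
def edgesOf (l : List V) : List (Sym2 V) := l.zipWith (fun a b => s(a, b)) l.tail

lemma edgesOf_support (G : SimpleGraph V) {u v : V} (p : G.Walk u v) :
    edgesOf p.support = p.edges := by
  induction p with
  | nil => rfl
  | @cons u u' v h q ih =>
    rw [Walk.support_cons, Walk.edges_cons, ← ih]
    obtain ⟨t, ht⟩ : ∃ t, q.support = u' :: t := ⟨_, q.support_eq_cons⟩
    rw [edgesOf, edgesOf, ht]
    rfl

omit [DecidableEq V] in
lemma length_edgesOf (l : List V) : (edgesOf l).length = l.length - 1 := by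
  rw [edgesOf, List.length_zipWith, List.length_tail]
  omega


omit [DecidableEq V] in
lemma list_sum_toFinset_le [DecidableEq (Sym2 V)] {l : List (Sym2 V)} {f : Sym2 V → ℝ}
    (hf : ∀ e, 0 ≤ f e) : ∑ e ∈ l.toFinset, f e ≤ (l.map f).sum := by
  induction l with
  | nil => simp
  | cons a l ih =>
    simp only [List.toFinset_cons, List.map_cons, List.sum_cons]
    by_cases h : a ∈ l.toFinset
    · rw [Finset.insert_eq_self.2 h]
      have := hf a
      linarith
    · rw [Finset.sum_insert h]
      linarith

omit [DecidableEq V] in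
lemma wlen_nonneg {G : SimpleGraph V} {ω : Sym2 V → ℝ} (hω : ∀ e, 0 ≤ ω e) {x y : V}
    (p : G.Walk x y) : 0 ≤ wLen G ω p := by
  refine List.sum_nonneg ?_
  intro a ha
  obtain ⟨e, _, rfl⟩ := List.mem_map.1 ha
  exact hω e

lemma wlen_bypass_le [DecidableEq (Sym2 V)] {G : SimpleGraph V} {ω : Sym2 V → ℝ}
    (hω : ∀ e, 0 ≤ ω e) {x y : V} (q : G.Walk x y) :
    wLen G ω q.bypass ≤ wLen G ω q := by
  have h1 : wLen G ω q.bypass = ∑ e ∈ q.bypass.edges.toFinset, ω e :=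
    (List.sum_toFinset ω (q.bypass_isPath.edges_nodup)).symm
  have h2 : ∑ e ∈ q.bypass.edges.toFinset, ω e ≤ ∑ e ∈ q.edges.toFinset, ω e := by
    refine Finset.sum_le_sum_of_subset_of_nonneg ?_ (fun e _ _ => hω e)
    intro e he
    exact List.mem_toFinset.2 (q.edges_bypass_subset (List.mem_toFinset.1 he))
  have h3 : ∑ e ∈ q.edges.toFinset, ω e ≤ wLen G ω q := list_sum_toFinset_le hω
  linarith

/-- The bad event: some potential path (given by its vertex list in `ch`) has at least `k`
cheap (weight `< ε`) edges. -/
def Bad [DecidableEq (Sym2 V)] (ch : Finset (List V)) (k : ℕ) (ε : ℝ) : Set (Sym2 V → ℝ) :=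
  ⋃ l ∈ ch, ⋃ S ∈ (edgesOf l).toFinset.powersetCard k,
    {ω : Sym2 V → ℝ | ∀ e ∈ S, ω e < ε}

omit [DecidableEq V] in
lemma nat_choose_le_two_pow (c k : ℕ) : c.choose k ≤ 2 ^ c := by
  rcases le_or_gt k c with h | h
  · calc c.choose k ≤ ∑ i ∈ Finset.range (c+1), c.choose i :=
        Finset.single_le_sum (fun i _ => Nat.zero_le _) (Finset.mem_range.2 (by omega))
      _ = 2 ^ c := Nat.sum_range_choose c
  · simp [Nat.choose_eq_zero_of_lt h]

omit [DecidableEq V] in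
open scoped ENNReal in
lemma meas_Bad_le [DecidableEq (Sym2 V)] (P : Measure (Sym2 V → ℝ)) (ν : Measure ℝ)
    (hindep : iIndepFun (fun e ω => ω e) P)
    (hlaw : ∀ e : Sym2 V, P.map (fun ω => ω e) = ν)
    (ch : Finset (List V)) (k m : ℕ) (hm : ∀ l ∈ ch, (edgesOf l).toFinset.card ≤ m) (ε : ℝ) :
    P (Bad ch k ε) ≤ (ch.card : ℝ≥0∞) * 2 ^ m * (ν (Set.Iio ε)) ^ k := by
  have key : ∀ S : Finset (Sym2 V), P {ω : Sym2 V → ℝ | ∀ e ∈ S, ω e < ε}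
      = (ν (Set.Iio ε)) ^ S.card := by
    intro S
    have hset : {ω : Sym2 V → ℝ | ∀ e ∈ S, ω e < ε}
        = ⋂ e ∈ S, (fun ω : Sym2 V → ℝ => ω e) ⁻¹' Set.Iio ε := by
      ext ω; simp [Set.mem_iInter]
    rw [hset, hindep.meas_biInter (fun e _ => ⟨Set.Iio ε, measurableSet_Iio, rfl⟩)]
    rw [Finset.prod_congr rfl (fun e _ => ?_), Finset.prod_const]
    rw [← hlaw e, Measure.map_apply (measurable_pi_apply e) measurableSet_Iio]
  calc P (Bad ch k ε)
      ≤ ∑ l ∈ ch, P (⋃ S ∈ (edgesOf l).toFinset.powersetCard k,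
          {ω : Sym2 V → ℝ | ∀ e ∈ S, ω e < ε}) := measure_biUnion_finset_le _ _
    _ ≤ ∑ l ∈ ch, ∑ S ∈ (edgesOf l).toFinset.powersetCard k,
          P {ω : Sym2 V → ℝ | ∀ e ∈ S, ω e < ε} :=
        Finset.sum_le_sum (fun l _ => measure_biUnion_finset_le _ _)
    _ = ∑ l ∈ ch, ∑ S ∈ (edgesOf l).toFinset.powersetCard k, (ν (Set.Iio ε)) ^ k := by
        refine Finset.sum_congr rfl fun l _ => Finset.sum_congr rfl fun S hS => ?_
        rw [key S, (Finset.mem_powersetCard.1 hS).2]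
    _ ≤ ∑ _l ∈ ch, (2 ^ m : ℝ≥0∞) * (ν (Set.Iio ε)) ^ k := by
        refine Finset.sum_le_sum fun l hl => ?_
        rw [Finset.sum_const, Finset.card_powersetCard, nsmul_eq_mul]
        refine mul_le_mul_left ?_ _
        calc ((((edgesOf l).toFinset.card).choose k : ℕ) : ℝ≥0∞)
            ≤ ((2 ^ (edgesOf l).toFinset.card : ℕ) : ℝ≥0∞) := by
              exact_mod_cast nat_choose_le_two_pow _ k
          _ ≤ ((2 ^ m : ℕ) : ℝ≥0∞) := by
              exact_mod_cast Nat.pow_le_pow_right (by omega) (hm l hl)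
          _ = (2 ^ m : ℝ≥0∞) := by push_cast; ring
    _ = (ch.card : ℝ≥0∞) * 2 ^ m * (ν (Set.Iio ε)) ^ k := by
        rw [Finset.sum_const, nsmul_eq_mul]; ring

/-- Lower bound on the weighted length of a self-avoiding path avoiding the bad event. -/
lemma path_lower_bound [DecidableEq (Sym2 V)] {G : SimpleGraph V} {x y : V}
    (σ : G.Walk x y) (hσ : σ.IsPath) (ch : Finset (List V))
    (hch : σ.reverse.support ∈ ch) {ω : Sym2 V → ℝ} (hω : ∀ e, 0 ≤ ω e) {ε : ℝ} (hε : 0 < ε)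
    (hbad : ω ∉ Bad ch (σ.length / 2 + 1) ε) :
    ε / 2 * σ.length ≤ wLen G ω σ := by
  set n := σ.length with hn
  set F := σ.edges.toFinset with hF
  have hnodup : σ.edges.Nodup := hσ.edges_nodup
  have hFcard : F.card = n := by
    rw [hF, List.toFinset_card_of_nodup hnodup, Walk.length_edges]
  set cheap := F.filter (fun e => ω e < ε) with hcheap
  have hc : cheap.card ≤ n / 2 := by
    by_contra hcon
    push_neg at hcon
    obtain ⟨S, hSsub, hScard⟩ := Finset.exists_subset_card_eq (by omega : n / 2 + 1 ≤ cheap.card)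
    apply hbad
    have hE : (edgesOf σ.reverse.support).toFinset = F := by
      rw [edgesOf_support, Walk.edges_reverse, List.toFinset_reverse]
    refine Set.mem_biUnion hch ?_
    refine Set.mem_biUnion (show S ∈ (edgesOf σ.reverse.support).toFinset.powersetCard (n/2+1)
      from Finset.mem_powersetCard.2 ⟨by rw [hE]; exact hSsub.trans (Finset.filter_subset _ _),
        hScard⟩) ?_
    intro e he
    exact (Finset.mem_filter.1 (hSsub he)).2
  have hsum : wLen G ω σ = ∑ e ∈ F, ω e := (List.sum_toFinset ω hnodup).symm
  have hsplit : ∑ e ∈ F, ω e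
      = ∑ e ∈ cheap, ω e + ∑ e ∈ F.filter (fun e => ¬ ω e < ε), ω e := by
    rw [hcheap, Finset.sum_filter_add_sum_filter_not]
  have hcheap_nonneg : 0 ≤ ∑ e ∈ cheap, ω e := Finset.sum_nonneg fun e _ => hω e
  have hexp : ((F.filter (fun e => ¬ ω e < ε)).card : ℝ) * ε
      ≤ ∑ e ∈ F.filter (fun e => ¬ ω e < ε), ω e := by
    rw [← nsmul_eq_mul]
    refine Finset.card_nsmul_le_sum _ _ _ fun e he => ?_
    exact not_lt.1 (Finset.mem_filter.1 he).2
  have hcards0 : cheap.card + (F.filter (fun e => ¬ ω e < ε)).card = n := by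
    rw [hcheap, ← hFcard]
    exact Finset.card_filter_add_card_filter_not (s := F) (p := fun e => ω e < ε)
  have hcards : (F.filter (fun e => ¬ ω e < ε)).card = n - cheap.card := by omega
  have hge : ((n : ℝ) / 2) ≤ ((n - cheap.card : ℕ) : ℝ) := by
    have h2 : n ≤ 2 * (n - cheap.card) := by omega
    have := (Nat.cast_le (α := ℝ)).2 h2
    push_cast at this
    linarith
  rw [hsum, hsplit]
  rw [hcards] at hexp
  have : ε / 2 * n = ε * ((n : ℝ) / 2) := by ring
  rw [this]
  have h4 : ε * ((n : ℝ) / 2) ≤ ε * ((n - cheap.card : ℕ) : ℝ) :=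
    mul_le_mul_of_nonneg_left hge (le_of_lt hε)
  calc ε * ((n : ℝ) / 2) ≤ ((n - cheap.card : ℕ) : ℝ) * ε := by linarith
    _ ≤ ∑ e ∈ F.filter (fun e => ¬ ω e < ε), ω e := hexp
    _ ≤ _ := by linarith


open scoped ENNReal in
lemma exists_eps (ν : Measure ℝ) [IsProbabilityMeasure ν]
    (hsupp : ν (Set.Iio (0:ℝ)) = 0) (hzero : ν ({(0:ℝ)} : Set ℝ) = 0)
    {δ : ℝ≥0∞} (hδ : 0 < δ) : ∃ ε : ℝ, 0 < ε ∧ ν (Set.Iio ε) < δ := by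
  have h0 : ν (Set.Iic (0:ℝ)) = 0 := by
    have hIic : Set.Iic (0:ℝ) = Set.Iio 0 ∪ {0} := by
      ext z
      simp [le_iff_lt_or_eq]
    rw [hIic]
    refine le_antisymm ((measure_union_le _ _).trans ?_) (zero_le ..)
    rw [hsupp, hzero]
    simp
  have hmono : Antitone (fun n : ℕ => Set.Iio (((n:ℝ)+1)⁻¹)) := by
    intro m n hmn
    refine Set.Iio_subset_Iio ?_
    refine inv_anti₀ (by positivity) ?_
    have := (Nat.cast_le (α := ℝ)).2 hmn
    linarith
  have hint : ⋂ n : ℕ, Set.Iio (((n:ℝ)+1)⁻¹) = Set.Iic 0 := by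
    ext z
    simp only [Set.mem_iInter, Set.mem_Iio, Set.mem_Iic]
    constructor
    · intro h
      by_contra hz
      push_neg at hz
      obtain ⟨n, hn⟩ := exists_nat_one_div_lt hz
      have := h n
      rw [one_div] at hn
      linarith
    · intro h n
      have : (0:ℝ) < ((n:ℝ)+1)⁻¹ := by positivity
      linarith
  have htends := tendsto_measure_iInter_atTop (μ := ν)
    (fun n => measurableSet_Iio.nullMeasurableSet) hmono ⟨0, measure_ne_top ν _⟩
  rw [hint, h0] at htends
  obtain ⟨n, hn⟩ := (htends.eventually (gt_mem_nhds hδ)).exists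
  exact ⟨((n:ℝ)+1)⁻¹, by positivity, hn⟩

end Helpers

/-- Points linearly far from a set `γ` in `X` remain almost surely
linearly far (up to an additive constant) from `γ` in `X_ω`: there is `c > 0` such that
a.e. `ω` admits `r₁(ω)` with: `d(x,γ) ≥ c₁·d(o,x)` implies
`d_ω(x,γ) ≥ c·c₁·d(o,x) − r₁`. -/
theorem fpp_linearly_far_stays_far {V : Type*} (G : SimpleGraph V)
    (o : V) (hconn : G.Connected) (hinf : Infinite V)
    (q0 : ℕ) (hdeg : BoundedDegree G q0)
    (ν : Measure ℝ) [IsProbabilityMeasure ν]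
    (P : Measure (Sym2 V → ℝ)) [IsProbabilityMeasure P]
    (hindep : iIndepFun (fun e ω => ω e) P)
    (hlaw : ∀ e : Sym2 V, P.map (fun ω => ω e) = ν)
    (hsupp : ν (Set.Iio (0 : ℝ)) = 0)
    (hzero : ν ({(0 : ℝ)} : Set ℝ) = 0)
    (γ : Set V) (c₁ : ℝ) (hc₁ : 0 < c₁) :
    ∃ c : ℝ, 0 < c ∧ ∀ᵐ ω ∂P, ∃ r₁ : ℝ, ∀ x : V,
      c₁ * gd G o x ≤ dInf (gd G) x γ →
      c * c₁ * gd G o x - r₁ ≤ dInf (wDist G ω) x γ := by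
  classical
  have hfin : ∀ v : V, (G.neighborSet v).Finite := fun v => (hdeg v).1
  set q1 := max q0 1 with hq1
  have hq : ∀ v, (nbrF G hfin v).card ≤ q1 := by
    intro v
    have h1 := (hdeg v).2
    rw [Set.ncard_eq_toFinset_card _ (hfin v)] at h1
    exact h1.trans (le_max_left _ _)
  set D := 1 / c₁ with hD
  have hDpos : 0 < D := by positivity
  set dD := ⌈D⌉₊ with hdD
  set a := q1 + 1 with ha
  have ha2 : 2 ≤ a := by omega
  set E := 2 * dD + 2 with hE
  set M := a ^ E with hM
  have hM1 : 1 ≤ M := Nat.one_le_pow _ _ (by omega)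
  set δ : ENNReal := (((2 * M : ℕ) : ENNReal))⁻¹ with hδdef
  have hδpos : 0 < δ := ENNReal.inv_pos.2 (ENNReal.natCast_ne_top _)
  have hδ1 : δ ≤ 1 := by
    rw [hδdef]
    refine ENNReal.inv_le_one.2 ?_
    exact_mod_cast Nat.one_le_iff_ne_zero.2 (by omega)
  obtain ⟨ε, hεpos, hεsmall⟩ := exists_eps ν hsupp hzero (ENNReal.pow_pos hδpos 2)
  set p := ν (Set.Iio ε) with hp
  have hple : p ≤ δ ^ 2 := le_of_lt hεsmall
  set BadN : ℕ → Set (Sym2 V → ℝ) :=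
    fun n => Bad (chains G hfin (ballF G hfin o (dD * n)) n) (n / 2 + 1) ε with hBadN
  have hMδ : ((M : ℕ) : ENNReal) * δ = 2⁻¹ := by
    have hM0 : ((M : ℕ) : ENNReal) ≠ 0 := Nat.cast_ne_zero.2 (by omega)
    have hMt : ((M : ℕ) : ENNReal) ≠ ⊤ := ENNReal.natCast_ne_top _
    rw [hδdef, Nat.cast_mul, Nat.cast_ofNat,
      ENNReal.mul_inv (Or.inl (by norm_num)) (Or.inl ENNReal.ofNat_ne_top)]
    calc ((M : ℕ) : ENNReal) * ((2:ENNReal)⁻¹ * ((M : ℕ) : ENNReal)⁻¹)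
        = (((M : ℕ) : ENNReal) * ((M : ℕ) : ENNReal)⁻¹) * 2⁻¹ := by ring
      _ = 2⁻¹ := by rw [ENNReal.mul_inv_cancel hM0 hMt, one_mul]
  have hPB : ∀ n : ℕ, P (BadN n) ≤ ((a ^ 2 : ℕ) : ENNReal) * 2⁻¹ ^ n := by
    intro n
    have hedge : ∀ l ∈ chains G hfin (ballF G hfin o (dD * n)) n,
        (edgesOf l).toFinset.card ≤ n := by
      intro l hl
      refine (List.toFinset_card_le _).trans ?_
      rw [length_edgesOf, length_of_mem_chains G hfin _ n l hl]
      omega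
    have hb := meas_Bad_le P ν hindep hlaw
      (chains G hfin (ballF G hfin o (dD * n)) n) (n / 2 + 1) n hedge ε
    have hcardN : (chains G hfin (ballF G hfin o (dD * n)) n).card * 2 ^ n
        ≤ a ^ 2 * (a ^ E) ^ n := by
      have hc1 : (chains G hfin (ballF G hfin o (dD * n)) n).card
          ≤ ((dD * n + 1) * a ^ (dD * n)) * q1 ^ n := by
        refine (card_chains_le G hfin _ q1 hq n).trans ?_
        exact Nat.mul_le_mul_right _ (card_ballF_le G hfin o (dD * n) q1 hq)
      have h1 : dD * n + 1 ≤ a ^ (dD * n + 1) :=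
        le_trans (Nat.lt_two_pow_self (n := dD * n + 1)).le (Nat.pow_le_pow_left ha2 _)
      have h2 : q1 ^ n ≤ a ^ n := Nat.pow_le_pow_left (by omega) n
      have h3 : (2 : ℕ) ^ n ≤ a ^ n := Nat.pow_le_pow_left ha2 n
      calc (chains G hfin (ballF G hfin o (dD * n)) n).card * 2 ^ n
          ≤ (((dD * n + 1) * a ^ (dD * n)) * q1 ^ n) * 2 ^ n :=
            Nat.mul_le_mul_right _ hc1
        _ ≤ ((a ^ (dD * n + 1) * a ^ (dD * n)) * a ^ n) * a ^ n :=
            Nat.mul_le_mul (Nat.mul_le_mul (Nat.mul_le_mul h1 le_rfl) h2) h3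
        _ = a ^ (E * n + 1) := by rw [← pow_add, ← pow_add, ← pow_add]; congr 1; ring
        _ ≤ a ^ (E * n + 2) := Nat.pow_le_pow_right (by omega) (by omega)
        _ = a ^ 2 * (a ^ E) ^ n := by rw [← pow_mul, ← pow_add]; congr 1; ring
    have hpn : p ^ (n / 2 + 1) ≤ δ ^ n := by
      calc p ^ (n / 2 + 1) ≤ (δ ^ 2) ^ (n / 2 + 1) := pow_le_pow_left' hple _
        _ = δ ^ (2 * (n / 2 + 1)) := by rw [← pow_mul]
        _ = δ ^ n * δ ^ (2 * (n / 2 + 1) - n) := by rw [← pow_add]; congr 1; omega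
        _ ≤ δ ^ n * 1 := mul_le_mul_right (pow_le_one' hδ1 _) _
        _ = δ ^ n := mul_one _
    calc P (BadN n)
        ≤ ((chains G hfin (ballF G hfin o (dD * n)) n).card : ENNReal) * 2 ^ n * p ^ (n/2+1) := hb
      _ = (((chains G hfin (ballF G hfin o (dD * n)) n).card * 2 ^ n : ℕ) : ENNReal)
            * p ^ (n/2+1) := by push_cast; ring
      _ ≤ ((a ^ 2 * (a ^ E) ^ n : ℕ) : ENNReal) * p ^ (n/2+1) := by
          exact mul_le_mul_left (by exact_mod_cast hcardN) _
      _ = ((a ^ 2 : ℕ) : ENNReal) * (((a ^ E : ℕ) : ENNReal)) ^ n * p ^ (n/2+1) := by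
          push_cast; ring
      _ ≤ ((a ^ 2 : ℕ) : ENNReal) * (((a ^ E : ℕ) : ENNReal)) ^ n * δ ^ n :=
          mul_le_mul_right hpn _
      _ = ((a ^ 2 : ℕ) : ENNReal) * ((((M : ℕ) : ENNReal)) * δ) ^ n := by
          rw [mul_pow, hM]; ring
      _ = ((a ^ 2 : ℕ) : ENNReal) * 2⁻¹ ^ n := by rw [hMδ]
  have hsum : (∑' n, P (BadN n)) ≠ ⊤ := by
    have hle : (∑' n, P (BadN n)) ≤ ((a ^ 2 : ℕ) : ENNReal) * (1 - 2⁻¹)⁻¹ := by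
      calc (∑' n, P (BadN n)) ≤ ∑' n, ((a ^ 2 : ℕ) : ENNReal) * 2⁻¹ ^ n :=
            ENNReal.tsum_le_tsum hPB
        _ = ((a ^ 2 : ℕ) : ENNReal) * ∑' n, (2⁻¹ : ENNReal) ^ n := ENNReal.tsum_mul_left
        _ = ((a ^ 2 : ℕ) : ENNReal) * (1 - 2⁻¹)⁻¹ := by rw [ENNReal.tsum_geometric]
    refine ne_top_of_le_ne_top ?_ hle
    rw [ENNReal.one_sub_inv_two]
    exact ENNReal.mul_ne_top (ENNReal.natCast_ne_top _) (by simp)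
  have hcV : Countable V := by
    refine Set.countable_univ_iff.mp ?_
    refine (Set.countable_iUnion (fun R : ℕ => (ballF G hfin o R).countable_toSet)).mono ?_
    intro x _
    exact Set.mem_iUnion.2 ⟨G.dist o x, mem_ballF G hfin o (hconn.preconnected o x) le_rfl⟩
  have hnn : ∀ᵐ ω ∂P, ∀ e : Sym2 V, 0 ≤ ω e := by
    rw [ae_all_iff]
    intro e
    rw [ae_iff]
    have hset : {ω : Sym2 V → ℝ | ¬ 0 ≤ ω e} = (fun ω : Sym2 V → ℝ => ω e) ⁻¹' Set.Iio 0 := by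
      ext ω; simp [not_le]
    rw [hset, ← Measure.map_apply (measurable_pi_apply e) measurableSet_Iio, hlaw e, hsupp]
  refine ⟨ε / 2, by positivity, ?_⟩
  filter_upwards [hnn, MeasureTheory.ae_eventually_notMem hsum] with ω hω hev
  obtain ⟨N, hN⟩ := Filter.eventually_atTop.1 hev
  refine ⟨ε / 2 * N, ?_⟩
  intro x hx
  have hgd0 : 0 ≤ gd G o x := Nat.cast_nonneg _
  have hr1 : 0 ≤ ε / 2 * N := by positivity
  rcases Set.eq_empty_or_nonempty γ with rfl | hγ
  · simp only [dInf, Set.image_empty, Real.sInf_empty] at hx ⊢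
    have hgd : gd G o x = 0 := by nlinarith
    rw [hgd]
    nlinarith
  · refine le_csInf (hγ.image _) ?_
    rintro b ⟨y, hy, rfl⟩
    have hxy : c₁ * gd G o x ≤ (G.dist x y : ℝ) := by
      refine hx.trans ?_
      refine csInf_le ⟨0, ?_⟩ (Set.mem_image_of_mem _ hy)
      rintro b ⟨z, _, rfl⟩
      exact Nat.cast_nonneg _
    refine le_csInf ⟨wLen G ω (hconn.preconnected x y).some,
      (hconn.preconnected x y).some, rfl⟩ ?_
    rintro s ⟨q, rfl⟩
    set σ := q.bypass with hσdef
    have hσp : σ.IsPath := q.bypass_isPath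
    set n := σ.length with hnd
    have hbyp : wLen G ω σ ≤ wLen G ω q := wlen_bypass_le hω q
    have hdn : c₁ * gd G o x ≤ (n : ℝ) := by
      refine hxy.trans ?_
      exact_mod_cast SimpleGraph.dist_le σ
    have hox : G.dist o x ≤ dD * n := by
      have h1 : (G.dist o x : ℝ) ≤ (n : ℝ) * D := by
        rw [hD]
        rw [show (n : ℝ) * (1 / c₁) = (n : ℝ) / c₁ by ring, le_div_iff₀ hc₁]
        calc (G.dist o x : ℝ) * c₁ = c₁ * gd G o x := by rw [gd]; ring
          _ ≤ (n : ℝ) := hdn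
      have h2 : (n : ℝ) * D ≤ (n : ℝ) * dD :=
        mul_le_mul_of_nonneg_left (Nat.le_ceil D) (Nat.cast_nonneg n)
      have h3 : (G.dist o x : ℝ) ≤ ((dD * n : ℕ) : ℝ) := by push_cast; linarith
      exact_mod_cast h3
    have hmem : σ.reverse.support ∈ chains G hfin (ballF G hfin o (dD * n)) n := by
      have hh := support_mem_chains G hfin σ.reverse
        (mem_ballF G hfin o (hconn.preconnected o x) hox)
      rwa [SimpleGraph.Walk.length_reverse] at hh
    have hmul : ε / 2 * c₁ * gd G o x = ε / 2 * (c₁ * gd G o x) := by ring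
    rcases le_or_gt N n with hNn | hNn
    · have hgood := path_lower_bound σ hσp _ hmem hω hεpos (hN n hNn)
      have h1 : ε / 2 * (c₁ * gd G o x) ≤ ε / 2 * n :=
        mul_le_mul_of_nonneg_left hdn (by positivity)
      rw [hmul]
      linarith
    · have h0 : 0 ≤ wLen G ω σ := wlen_nonneg hω σ
      have h1 : ε / 2 * (c₁ * gd G o x) ≤ ε / 2 * n :=
        mul_le_mul_of_nonneg_left hdn (by positivity)
      have h2 : (n : ℝ) ≤ N := by exact_mod_cast hNn.le
      have h3 : ε / 2 * (n : ℝ) ≤ ε / 2 * N :=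
        mul_le_mul_of_nonneg_left h2 (by positivity)
      rw [hmul]
      linarith
end FPPx
end
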